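/- In a quasitriangular weak Hopf algebra (H, R), the Drinfeld element u = S(R⁽²⁾)R⁽¹⁾ is invertible with inverse u⁻¹ = R⁽²⁾S²(R⁽¹⁾), and implements the square of the antipode: S²(h) = u h u⁻¹ for all h ∈ H. -/
import Mathlib


open TensorProduct

/-- A (finite) quantum groupoid / weak Hopf algebra over `k` (Böhm–Nill–Szlachányi). -/
structure WeakHopfAlgebra (k : Type*) (H : Type*) [CommRing k] [Ring H] [Algebra k H] where
  comul : H →ₗ[k] H ⊗[k] H
  counit : H →ₗ[k] k
  antipode : H →ₗ[k] H
  coassoc : ∀ h : H,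
    (TensorProduct.assoc k H H H) ((LinearMap.rTensor H comul) (comul h)) =
      (LinearMap.lTensor H comul) (comul h)
  counit_lid : ∀ h : H,
    (TensorProduct.lid k H) ((LinearMap.rTensor H counit) (comul h)) = h
  counit_rid : ∀ h : H,
    (TensorProduct.rid k H) ((LinearMap.lTensor H counit) (comul h)) = h
  comul_mul : ∀ a b : H, comul (a * b) = comul a * comul b
  weak_comul_one_left :
    (LinearMap.lTensor H comul) (comul 1) =
      (TensorProduct.assoc k H H H) (comul 1 ⊗ₜ[k] (1 : H)) * ((1 : H) ⊗ₜ[k] comul 1)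
  weak_comul_one_right :
    (LinearMap.lTensor H comul) (comul 1) =
      ((1 : H) ⊗ₜ[k] comul 1) * (TensorProduct.assoc k H H H) (comul 1 ⊗ₜ[k] (1 : H))
  weak_counit_left : ∀ f g h : H,
    counit (f * g * h) =
      (LinearMap.mul' k k)
        ((TensorProduct.map (counit ∘ₗ LinearMap.mulLeft k f)
          (counit ∘ₗ LinearMap.mulRight k h)) (comul g))
  weak_counit_right : ∀ f g h : H,
    counit (f * g * h) =
      (LinearMap.mul' k k)
        ((TensorProduct.map (counit ∘ₗ LinearMap.mulLeft k f)
          (counit ∘ₗ LinearMap.mulRight k h)) ((TensorProduct.comm k H H) (comul g)))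
  antipode_right : ∀ h : H,
    (LinearMap.mul' k H) ((LinearMap.lTensor H antipode) (comul h)) =
      (TensorProduct.lid k H) ((LinearMap.rTensor H counit) (comul 1 * (h ⊗ₜ[k] (1 : H))))
  antipode_left : ∀ h : H,
    (LinearMap.mul' k H) ((LinearMap.rTensor H antipode) (comul h)) =
      (TensorProduct.rid k H) ((LinearMap.lTensor H counit) (((1 : H) ⊗ₜ[k] h) * comul 1))
  antipode_conv : ∀ h : H,
    (LinearMap.mul' k H)
      ((TensorProduct.map ((LinearMap.mul' k H) ∘ₗ (LinearMap.rTensor H antipode) ∘ₗ comul)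
        antipode) (comul h)) = antipode h

namespace WeakHopfAlgebra

variable {k H : Type*} [CommRing k] [Ring H] [Algebra k H] (W : WeakHopfAlgebra k H)

/-- The target counital map `ε_t(h) = ε(1₍₁₎h)1₍₂₎`. -/
noncomputable def εt : H →ₗ[k] H :=
  (TensorProduct.lid k H).toLinearMap ∘ₗ (LinearMap.rTensor H W.counit) ∘ₗ
    (LinearMap.mulLeft k (W.comul 1)) ∘ₗ ((TensorProduct.mk k H H).flip 1)

/-- The source counital map `ε_s(h) = 1₍₁₎ε(h1₍₂₎)`. -/
noncomputable def εs : H →ₗ[k] H :=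
  (TensorProduct.rid k H).toLinearMap ∘ₗ (LinearMap.lTensor H W.counit) ∘ₗ
    (LinearMap.mulRight k (W.comul 1)) ∘ₗ (TensorProduct.mk k H H 1)

end WeakHopfAlgebra

namespace WeakHopfAlgebra

variable (k H : Type*) [CommRing k] [Ring H] [Algebra k H]

/-- Embedding `x ⊗ y ↦ x ⊗ y ⊗ 1` into the first two legs of `H ⊗ H ⊗ H`. -/
noncomputable def leg12 : H ⊗[k] H →ₗ[k] H ⊗[k] (H ⊗[k] H) :=
  (TensorProduct.assoc k H H H).toLinearMap ∘ₗ ((TensorProduct.mk k (H ⊗[k] H) H).flip 1)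

/-- Embedding `x ⊗ y ↦ x ⊗ 1 ⊗ y` into the first and third legs of `H ⊗ H ⊗ H`. -/
noncomputable def leg13 : H ⊗[k] H →ₗ[k] H ⊗[k] (H ⊗[k] H) :=
  TensorProduct.map LinearMap.id (TensorProduct.mk k H H 1)

/-- Embedding `x ⊗ y ↦ 1 ⊗ x ⊗ y` into the last two legs of `H ⊗ H ⊗ H`. -/
noncomputable def leg23 : H ⊗[k] H →ₗ[k] H ⊗[k] (H ⊗[k] H) :=
  TensorProduct.mk k H (H ⊗[k] H) 1

end WeakHopfAlgebra

namespace WeakHopfAlgebra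

section Aux

variable {k H : Type*} [CommRing k] [Ring H] [Algebra k H] (W : WeakHopfAlgebra k H)

-- basic leg lemmas
lemma leg12_tmul (a b : H) : leg12 k H (a ⊗ₜ[k] b) = a ⊗ₜ[k] (b ⊗ₜ[k] (1:H)) := by
  simp [leg12]

lemma leg13_tmul (a b : H) : leg13 k H (a ⊗ₜ[k] b) = a ⊗ₜ[k] ((1:H) ⊗ₜ[k] b) := by
  simp [leg13]

lemma leg23_apply (x : H ⊗[k] H) : leg23 k H x = (1:H) ⊗ₜ[k] x := rfl

lemma leg12_mul (x y : H ⊗[k] H) : leg12 k H x * leg12 k H y = leg12 k H (x * y) := by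
  induction x using TensorProduct.induction_on with
  | zero => simp [zero_mul]
  | tmul a b =>
    induction y using TensorProduct.induction_on with
    | zero => simp [mul_zero]
    | tmul c d => simp [leg12_tmul, Algebra.TensorProduct.tmul_mul_tmul]
    | add u v hu hv => simp only [map_add, mul_add, hu, hv]
  | add u v hu hv => simp only [map_add, add_mul, hu, hv]

lemma leg23_mul (x y : H ⊗[k] H) : leg23 k H x * leg23 k H y = leg23 k H (x * y) := by
  simp [leg23_apply, Algebra.TensorProduct.tmul_mul_tmul]

-- pointwise forms of axioms
lemma comul_one_mul (h : H) : W.comul 1 * W.comul h = W.comul h := by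
  rw [← W.comul_mul, one_mul]

lemma comul_mul_one (h : H) : W.comul h * W.comul 1 = W.comul h := by
  rw [← W.comul_mul, mul_one]

lemma εt_apply (h : H) :
    W.εt h = (TensorProduct.lid k H)
      ((LinearMap.rTensor H W.counit) (W.comul 1 * (h ⊗ₜ[k] (1:H)))) := rfl

lemma εs_apply (h : H) :
    W.εs h = (TensorProduct.rid k H)
      ((LinearMap.lTensor H W.counit) (((1:H) ⊗ₜ[k] h) * W.comul 1)) := rfl

lemma antipode_right' (h : H) :
    (LinearMap.mul' k H) ((LinearMap.lTensor H W.antipode) (W.comul h)) = W.εt h := by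
  rw [εt_apply]; exact W.antipode_right h

lemma antipode_left' (h : H) :
    (LinearMap.mul' k H) ((LinearMap.rTensor H W.antipode) (W.comul h)) = W.εs h := by
  rw [εs_apply]; exact W.antipode_left h

lemma etm_eq : (LinearMap.mul' k H) ∘ₗ (LinearMap.lTensor H W.antipode) ∘ₗ W.comul = W.εt := by
  ext h; exact W.antipode_right' h

lemma esm_eq : (LinearMap.mul' k H) ∘ₗ (LinearMap.rTensor H W.antipode) ∘ₗ W.comul = W.εs := by
  ext h; exact W.antipode_left' h

-- weak comul axiom in leg form
lemma wco_right :
    (LinearMap.lTensor H W.comul) (W.comul 1) =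
      leg23 k H (W.comul 1) * leg12 k H (W.comul 1) := by
  rw [W.weak_comul_one_right]; rfl

lemma wco_left :
    (LinearMap.lTensor H W.comul) (W.comul 1) =
      leg12 k H (W.comul 1) * leg23 k H (W.comul 1) := by
  rw [W.weak_comul_one_left]; rfl

/-- the contraction `a ⊗ (b ⊗ c) ↦ ε(b) • (a ⊗ c)` -/
noncomputable def thermid : H ⊗[k] (H ⊗[k] H) →ₗ[k] H ⊗[k] H :=
  LinearMap.lTensor H ((TensorProduct.lid k H).toLinearMap ∘ₗ (LinearMap.rTensor H W.counit))

lemma thermid_tmul (a b c : H) :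
    W.thermid (a ⊗ₜ[k] (b ⊗ₜ[k] c)) = W.counit b • (a ⊗ₜ[k] c) := by
  simp [thermid, TensorProduct.tmul_smul]

/-- 2.7a : `Σ h₁ ⊗ ε_t(h₂) = Δ(1)(h ⊗ 1)` -/
lemma seven_a (h : H) :
    (LinearMap.lTensor H W.εt) (W.comul h) = W.comul 1 * (h ⊗ₜ[k] (1:H)) := by
  have E1 : W.thermid ((TensorProduct.assoc k H H H)
        ((LinearMap.rTensor H W.comul) (W.comul 1)) * leg12 k H (W.comul h)) =
      W.thermid (leg23 k H (W.comul 1) * leg12 k H (W.comul h)) := by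
    rw [W.coassoc 1, wco_right, mul_assoc, leg12_mul, comul_one_mul]
  -- LHS evaluation
  have EL : ∀ z : H ⊗[k] H, W.thermid ((TensorProduct.assoc k H H H)
        ((LinearMap.rTensor H W.comul) z) * leg12 k H (W.comul h)) =
      z * (h ⊗ₜ[k] (1:H)) := by
    intro z
    induction z using TensorProduct.induction_on with
    | zero => simp [zero_mul]
    | tmul p r =>
      have key : ∀ (w y : H ⊗[k] H), W.thermid ((TensorProduct.assoc k H H H) (w ⊗ₜ[k] r) *
            leg12 k H y) =
          ((TensorProduct.rid k H) ((LinearMap.lTensor H W.counit) (w * y))) ⊗ₜ[k] r := by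
        intro w y
        induction w using TensorProduct.induction_on with
        | zero => simp [zero_mul]
        | tmul s t =>
          induction y using TensorProduct.induction_on with
          | zero => simp [mul_zero]
          | tmul c d =>
            simp [leg12_tmul, Algebra.TensorProduct.tmul_mul_tmul, thermid_tmul,
              TensorProduct.smul_tmul']
          | add u v hu hv => simp only [map_add, mul_add, hu, hv, TensorProduct.add_tmul]
        | add u v hu hv => simp only [map_add, TensorProduct.add_tmul, add_mul, hu, hv]
      have : (LinearMap.rTensor H W.comul) (p ⊗ₜ[k] r) = (W.comul p) ⊗ₜ[k] r := by
        simp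
      rw [this, key (W.comul p) (W.comul h), ← W.comul_mul, W.counit_rid (p*h),
        Algebra.TensorProduct.tmul_mul_tmul, mul_one]
    | add u v hu hv => simp only [map_add, add_mul, hu, hv]
  -- RHS evaluation
  have ER : ∀ y : H ⊗[k] H, W.thermid (leg23 k H (W.comul 1) * leg12 k H y) =
      (LinearMap.lTensor H W.εt) y := by
    intro y
    induction y using TensorProduct.induction_on with
    | zero => simp [mul_zero]
    | tmul c d =>
      have key : ∀ z : H ⊗[k] H, W.thermid (leg23 k H z * leg12 k H (c ⊗ₜ[k] d)) =
          c ⊗ₜ[k] ((TensorProduct.lid k H)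
            ((LinearMap.rTensor H W.counit) (z * (d ⊗ₜ[k] (1:H))))) := by
        intro z
        induction z using TensorProduct.induction_on with
        | zero => simp [zero_mul]
        | tmul p q =>
          simp [leg23_apply, leg12_tmul, Algebra.TensorProduct.tmul_mul_tmul, thermid_tmul,
            TensorProduct.tmul_smul]
        | add u v hu hv => simp only [map_add, add_mul, hu, hv, TensorProduct.tmul_add]
      rw [key, ← εt_apply]
      simp
    | add u v hu hv => simp only [map_add, mul_add, hu, hv]
  rw [EL (W.comul 1), ER (W.comul h)] at E1
  exact E1.symm

/-- 2.7b : `Σ ε_s(h₁) ⊗ h₂ = (1 ⊗ h)Δ(1)` -/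
lemma seven_b (h : H) :
    (LinearMap.rTensor H W.εs) (W.comul h) = ((1:H) ⊗ₜ[k] h) * W.comul 1 := by
  have E1 : W.thermid (leg23 k H (W.comul h) *
        (LinearMap.lTensor H W.comul) (W.comul 1)) =
      W.thermid (leg23 k H (W.comul h) * leg12 k H (W.comul 1)) := by
    rw [wco_right, ← mul_assoc, leg23_mul, comul_mul_one]
  -- LHS evaluation
  have EL : ∀ z : H ⊗[k] H, W.thermid (leg23 k H (W.comul h) *
        (LinearMap.lTensor H W.comul) z) = ((1:H) ⊗ₜ[k] h) * z := by
    intro z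
    induction z using TensorProduct.induction_on with
    | zero => simp [mul_zero]
    | tmul p r =>
      have : (LinearMap.lTensor H W.comul) (p ⊗ₜ[k] r) = p ⊗ₜ[k] (W.comul r) := by simp
      rw [this, leg23_apply, Algebra.TensorProduct.tmul_mul_tmul, one_mul]
      rw [show (W.comul h) * (W.comul r) = W.comul (h * r) from (W.comul_mul h r).symm]
      simp only [thermid, LinearMap.lTensor_tmul, LinearMap.coe_comp, Function.comp_apply,
        LinearEquiv.coe_coe]
      rw [W.counit_lid (h*r), Algebra.TensorProduct.tmul_mul_tmul, one_mul]
    | add u v hu hv => simp only [map_add, mul_add, hu, hv]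
  -- RHS evaluation
  have ER : ∀ y : H ⊗[k] H, W.thermid (leg23 k H y * leg12 k H (W.comul 1)) =
      (LinearMap.rTensor H W.εs) y := by
    intro y
    induction y using TensorProduct.induction_on with
    | zero => simp [zero_mul]
    | tmul c d =>
      have key : ∀ z : H ⊗[k] H, W.thermid (leg23 k H (c ⊗ₜ[k] d) * leg12 k H z) =
          ((TensorProduct.rid k H)
            ((LinearMap.lTensor H W.counit) (((1:H) ⊗ₜ[k] c) * z))) ⊗ₜ[k] d := by
        intro z
        induction z using TensorProduct.induction_on with
        | zero => simp [mul_zero]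
        | tmul p q =>
          simp [leg23_apply, leg12_tmul, Algebra.TensorProduct.tmul_mul_tmul, thermid_tmul,
            TensorProduct.smul_tmul']
        | add u v hu hv => simp only [map_add, mul_add, hu, hv, TensorProduct.add_tmul]
      rw [key, ← εs_apply]
      simp
    | add u v hu hv => simp only [map_add, add_mul, hu, hv]
  rw [EL (W.comul 1), ER (W.comul h)] at E1
  exact E1.symm

end Aux

end WeakHopfAlgebra

namespace WeakHopfAlgebra

section Aux2

variable {k H : Type*} [CommRing k] [Ring H] [Algebra k H] (W : WeakHopfAlgebra k H)

/-- `ε(c·ε_t(b)) = ε(cb)` -/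
lemma et_absorb (c b : H) : W.counit (c * W.εt b) = W.counit (c * b) := by
  have key : ∀ z : H ⊗[k] H,
      W.counit (c * ((TensorProduct.lid k H)
        ((LinearMap.rTensor H W.counit) (z * (b ⊗ₜ[k] (1:H)))))) =
      (LinearMap.mul' k k) ((TensorProduct.map (W.counit ∘ₗ LinearMap.mulLeft k c)
        (W.counit ∘ₗ LinearMap.mulRight k b)) ((TensorProduct.comm k H H) z)) := by
    intro z
    induction z using TensorProduct.induction_on with
    | zero => simp [zero_mul]
    | tmul p q =>
      simp [Algebra.TensorProduct.tmul_mul_tmul, mul_smul_comm, mul_comm]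
    | add u v hu hv => simp only [map_add, add_mul, mul_add, TensorProduct.add_tmul, TensorProduct.tmul_add, hu, hv]
  rw [εt_apply, key (W.comul 1), ← W.weak_counit_right c 1 b, mul_one]

/-- `ε(ε_s(a)·c) = ε(ac)` -/
lemma es_absorb (a c : H) : W.counit (W.εs a * c) = W.counit (a * c) := by
  have key : ∀ z : H ⊗[k] H,
      W.counit (((TensorProduct.rid k H)
        ((LinearMap.lTensor H W.counit) (((1:H) ⊗ₜ[k] a) * z))) * c) =
      (LinearMap.mul' k k) ((TensorProduct.map (W.counit ∘ₗ LinearMap.mulLeft k a)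
        (W.counit ∘ₗ LinearMap.mulRight k c)) ((TensorProduct.comm k H H) z)) := by
    intro z
    induction z using TensorProduct.induction_on with
    | zero => simp [mul_zero]
    | tmul p q =>
      simp [Algebra.TensorProduct.tmul_mul_tmul, smul_mul_assoc, mul_comm]
    | add u v hu hv => simp only [map_add, add_mul, mul_add, TensorProduct.add_tmul, TensorProduct.tmul_add, hu, hv]
  rw [εs_apply, key (W.comul 1), ← W.weak_counit_right a 1 c, mul_one]

/-- `ε_t(a·ε_t(b)) = ε_t(ab)` -/
lemma et_et (a b : H) : W.εt (a * W.εt b) = W.εt (a * b) := by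
  have key : ∀ z : H ⊗[k] H,
      (TensorProduct.lid k H) ((LinearMap.rTensor H W.counit) (z * ((a * W.εt b) ⊗ₜ[k] (1:H)))) =
      (TensorProduct.lid k H) ((LinearMap.rTensor H W.counit) (z * ((a * b) ⊗ₜ[k] (1:H)))) := by
    intro z
    induction z using TensorProduct.induction_on with
    | zero => simp [zero_mul]
    | tmul p q =>
      simp only [Algebra.TensorProduct.tmul_mul_tmul, mul_one, LinearMap.rTensor_tmul,
        TensorProduct.lid_tmul]
      rw [← mul_assoc, ← mul_assoc, W.et_absorb (p*a) b]
    | add u v hu hv => simp only [map_add, add_mul, mul_add, TensorProduct.add_tmul, TensorProduct.tmul_add, hu, hv]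
  rw [W.εt_apply (a * W.εt b), W.εt_apply (a * b)]
  exact key (W.comul 1)

/-- `ε_s(ε_s(a)·b) = ε_s(ab)` -/
lemma es_es (a b : H) : W.εs (W.εs a * b) = W.εs (a * b) := by
  have key : ∀ z : H ⊗[k] H,
      (TensorProduct.rid k H) ((LinearMap.lTensor H W.counit) (((1:H) ⊗ₜ[k] (W.εs a * b)) * z)) =
      (TensorProduct.rid k H) ((LinearMap.lTensor H W.counit) (((1:H) ⊗ₜ[k] (a * b)) * z)) := by
    intro z
    induction z using TensorProduct.induction_on with
    | zero => simp [mul_zero]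
    | tmul p q =>
      simp only [Algebra.TensorProduct.tmul_mul_tmul, one_mul, LinearMap.lTensor_tmul,
        TensorProduct.rid_tmul]
      rw [mul_assoc, mul_assoc, W.es_absorb a (b*q)]
    | add u v hu hv => simp only [map_add, add_mul, mul_add, TensorProduct.add_tmul, TensorProduct.tmul_add, hu, hv]
  rw [W.εs_apply (W.εs a * b), W.εs_apply (a * b)]
  exact key (W.comul 1)

/-- contraction used for `comul_et` : `a ⊗ w ↦ ε(ab) • w` -/
noncomputable def xib (b : H) : H ⊗[k] (H ⊗[k] H) →ₗ[k] H ⊗[k] H :=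
  (TensorProduct.lid k (H ⊗[k] H)).toLinearMap ∘ₗ
    LinearMap.rTensor (H ⊗[k] H) (W.counit ∘ₗ LinearMap.mulRight k b)

lemma xib_tmul (b a : H) (w : H ⊗[k] H) :
    W.xib b (a ⊗ₜ[k] w) = W.counit (a * b) • w := by
  simp [xib]

/-- `Δ(ε_t b) = Δ(1)(ε_t b ⊗ 1)` -/
lemma comul_et (b : H) : W.comul (W.εt b) = W.comul 1 * (W.εt b ⊗ₜ[k] (1:H)) := by
  have key1 : ∀ z : H ⊗[k] H,
      W.comul ((TensorProduct.lid k H)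
        ((LinearMap.rTensor H W.counit) (z * (b ⊗ₜ[k] (1:H))))) =
      W.xib b ((LinearMap.lTensor H W.comul) z) := by
    intro z
    induction z using TensorProduct.induction_on with
    | zero => simp [zero_mul]
    | tmul p r => simp [Algebra.TensorProduct.tmul_mul_tmul, xib_tmul]
    | add u v hu hv => simp only [map_add, add_mul, mul_add, TensorProduct.add_tmul, TensorProduct.tmul_add, hu, hv]
  have key2 : ∀ z w : H ⊗[k] H,
      W.xib b (leg23 k H z * leg12 k H w) =
      z * (((TensorProduct.lid k H)
        ((LinearMap.rTensor H W.counit) (w * (b ⊗ₜ[k] (1:H))))) ⊗ₜ[k] (1:H)) := by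
    intro z w
    induction z using TensorProduct.induction_on with
    | zero => simp [zero_mul]
    | tmul p q =>
      induction w using TensorProduct.induction_on with
      | zero => simp [mul_zero]
      | tmul c d =>
        simp [leg23_apply, leg12_tmul, Algebra.TensorProduct.tmul_mul_tmul, xib_tmul,
          TensorProduct.smul_tmul', mul_smul_comm]
      | add u v hu hv => simp only [map_add, add_mul, mul_add, TensorProduct.add_tmul, TensorProduct.tmul_add, hu, hv]
    | add u v hu hv => simp only [map_add, add_mul, mul_add, TensorProduct.add_tmul, TensorProduct.tmul_add, hu, hv]
  rw [εt_apply, key1 (W.comul 1), wco_right, key2, ← εt_apply]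

/-- contraction used for `comul_es` : `w ⊗ r ↦ ε(ar) • w` (as a map on `H ⊗ (H ⊗ H)`) -/
noncomputable def xisa (a : H) : H ⊗[k] (H ⊗[k] H) →ₗ[k] H ⊗[k] H :=
  (TensorProduct.rid k (H ⊗[k] H)).toLinearMap ∘ₗ
    LinearMap.lTensor (H ⊗[k] H) (W.counit ∘ₗ LinearMap.mulLeft k a) ∘ₗ
    (TensorProduct.assoc k H H H).symm.toLinearMap

lemma xisa_tmul (a s t r : H) :
    W.xisa a (s ⊗ₜ[k] (t ⊗ₜ[k] r)) = W.counit (a * r) • (s ⊗ₜ[k] t) := by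
  simp [xisa]

/-- `Δ(ε_s a) = (1 ⊗ ε_s a)Δ(1)` -/
lemma comul_es (a : H) : W.comul (W.εs a) = ((1:H) ⊗ₜ[k] W.εs a) * W.comul 1 := by
  have key1 : ∀ z : H ⊗[k] H,
      W.comul ((TensorProduct.rid k H)
        ((LinearMap.lTensor H W.counit) (((1:H) ⊗ₜ[k] a) * z))) =
      W.xisa a ((TensorProduct.assoc k H H H) ((LinearMap.rTensor H W.comul) z)) := by
    intro z
    induction z using TensorProduct.induction_on with
    | zero => simp [mul_zero]
    | tmul p r =>
      simp only [Algebra.TensorProduct.tmul_mul_tmul, one_mul, LinearMap.lTensor_tmul,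
        TensorProduct.rid_tmul, LinearMap.rTensor_tmul, map_smul]
      simp [xisa, TensorProduct.smul_tmul']
    | add u v hu hv => simp only [map_add, add_mul, mul_add, TensorProduct.add_tmul, TensorProduct.tmul_add, hu, hv]
  have key2 : ∀ z w : H ⊗[k] H,
      W.xisa a (leg23 k H z * leg12 k H w) =
      ((1:H) ⊗ₜ[k] ((TensorProduct.rid k H)
        ((LinearMap.lTensor H W.counit) (((1:H) ⊗ₜ[k] a) * z)))) * w := by
    intro z w
    induction z using TensorProduct.induction_on with
    | zero => simp [zero_mul]
    | tmul p q =>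
      induction w using TensorProduct.induction_on with
      | zero => simp [mul_zero]
      | tmul c d =>
        simp [leg23_apply, leg12_tmul, Algebra.TensorProduct.tmul_mul_tmul, xisa_tmul,
          TensorProduct.smul_tmul', TensorProduct.tmul_smul, smul_mul_assoc]
      | add u v hu hv => simp only [map_add, add_mul, mul_add, TensorProduct.add_tmul, TensorProduct.tmul_add, hu, hv]
    | add u v hu hv =>
        simp only [map_add, add_mul, mul_add, TensorProduct.add_tmul, TensorProduct.tmul_add, hu, hv]
  rw [εs_apply, key1 (W.comul 1), W.coassoc 1, wco_right, key2, ← εs_apply]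

/-- the contraction `p ⊗ (q ⊗ r) ↦ ε(py)ε(xr) • q` -/
noncomputable def omxy (x y : H) : H ⊗[k] (H ⊗[k] H) →ₗ[k] H :=
  (TensorProduct.rid k H).toLinearMap ∘ₗ
    LinearMap.lTensor H (W.counit ∘ₗ LinearMap.mulLeft k x) ∘ₗ
    (TensorProduct.lid k (H ⊗[k] H)).toLinearMap ∘ₗ
    LinearMap.rTensor (H ⊗[k] H) (W.counit ∘ₗ LinearMap.mulRight k y)

lemma omxy_tmul (x y p q r : H) :
    W.omxy x y (p ⊗ₜ[k] (q ⊗ₜ[k] r)) = W.counit (p * y) • (W.counit (x * r) • q) := by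
  simp [omxy]

/-- `ε_s(x)` and `ε_t(y)` commute -/
lemma es_et_comm (x y : H) : W.εs x * W.εt y = W.εt y * W.εs x := by
  have C1a : ∀ z w : H ⊗[k] H,
      ((TensorProduct.rid k H) ((LinearMap.lTensor H W.counit) (((1:H) ⊗ₜ[k] x) * z))) *
        ((TensorProduct.lid k H) ((LinearMap.rTensor H W.counit) (w * (y ⊗ₜ[k] (1:H))))) =
      W.omxy x y (leg23 k H z * leg12 k H w) := by
    intro z w
    induction z using TensorProduct.induction_on with
    | zero => simp [zero_mul]
    | tmul p' q' =>
      induction w using TensorProduct.induction_on with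
      | zero => simp [mul_zero]
      | tmul c d =>
        simp [leg23_apply, leg12_tmul, Algebra.TensorProduct.tmul_mul_tmul, omxy_tmul,
          smul_mul_assoc, mul_smul_comm, smul_smul, mul_comm]
      | add u v hu hv => simp only [map_add, add_mul, mul_add, TensorProduct.add_tmul, TensorProduct.tmul_add, hu, hv]
    | add u v hu hv => simp only [map_add, add_mul, mul_add, TensorProduct.add_tmul, TensorProduct.tmul_add, hu, hv]
  have C1b : ∀ z w : H ⊗[k] H,
      ((TensorProduct.lid k H) ((LinearMap.rTensor H W.counit) (w * (y ⊗ₜ[k] (1:H))))) *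
        ((TensorProduct.rid k H) ((LinearMap.lTensor H W.counit) (((1:H) ⊗ₜ[k] x) * z))) =
      W.omxy x y (leg12 k H w * leg23 k H z) := by
    intro z w
    induction z using TensorProduct.induction_on with
    | zero => simp [mul_zero]
    | tmul p' q' =>
      induction w using TensorProduct.induction_on with
      | zero => simp [zero_mul]
      | tmul c d =>
        simp [leg23_apply, leg12_tmul, Algebra.TensorProduct.tmul_mul_tmul, omxy_tmul,
          smul_mul_assoc, mul_smul_comm, smul_smul, mul_comm]
      | add u v hu hv => simp only [map_add, add_mul, mul_add, TensorProduct.add_tmul, TensorProduct.tmul_add, hu, hv]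
    | add u v hu hv => simp only [map_add, add_mul, mul_add, TensorProduct.add_tmul, TensorProduct.tmul_add, hu, hv]
  have h1 := C1a (W.comul 1) (W.comul 1)
  have h2 := C1b (W.comul 1) (W.comul 1)
  rw [εs_apply, εt_apply, h1, h2, ← W.wco_right, W.wco_left]

end Aux2

end WeakHopfAlgebra

set_option maxHeartbeats 1000000
set_option synthInstance.maxHeartbeats 400000

namespace WeakHopfAlgebra

section Antimult

variable {k H : Type*} [CommRing k] [Ring H] [Algebra k H] (W : WeakHopfAlgebra k H)

/-- `Φ = S ∘ m` -/
noncomputable def Phi : H ⊗[k] H →ₗ[k] H := W.antipode ∘ₗ LinearMap.mul' k H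

/-- `Ψ(a ⊗ b) = S(b)S(a)` -/
noncomputable def Psi : H ⊗[k] H →ₗ[k] H :=
  LinearMap.mul' k H ∘ₗ (TensorProduct.map W.antipode W.antipode) ∘ₗ
    (TensorProduct.comm k H H).toLinearMap

lemma Phi_tmul (a b : H) : W.Phi (a ⊗ₜ[k] b) = W.antipode (a * b) := by simp [Phi]

lemma Psi_tmul (a b : H) : W.Psi (a ⊗ₜ[k] b) = W.antipode b * W.antipode a := by simp [Psi]

/-- coproduct of the coalgebra `H ⊗ H` -/
noncomputable def ΔK : H ⊗[k] H →ₗ[k] (H ⊗[k] H) ⊗[k] (H ⊗[k] H) :=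
  (TensorProduct.tensorTensorTensorComm k H H H H).toLinearMap ∘ₗ
    (TensorProduct.map W.comul W.comul)

lemma ΔK_tmul (a b : H) :
    W.ΔK (a ⊗ₜ[k] b) =
      (TensorProduct.tensorTensorTensorComm k H H H H) (W.comul a ⊗ₜ[k] W.comul b) := by
  simp [ΔK]

/-- convolution product on `Hom(H ⊗ H, H)` -/
noncomputable def conv (f g : H ⊗[k] H →ₗ[k] H) : H ⊗[k] H →ₗ[k] H :=
  LinearMap.mul' k H ∘ₗ (TensorProduct.map f g) ∘ₗ W.ΔK

lemma conv_tmul (f g : H ⊗[k] H →ₗ[k] H) (a b : H) :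
    W.conv f g (a ⊗ₜ[k] b) =
      (LinearMap.mul' k H) ((TensorProduct.map f g)
        ((TensorProduct.tensorTensorTensorComm k H H H H) (W.comul a ⊗ₜ[k] W.comul b))) := by
  simp [conv, ΔK]

lemma conv_Phi_mul : W.conv W.Phi (LinearMap.mul' k H) = W.εs ∘ₗ LinearMap.mul' k H := by
  apply TensorProduct.ext'
  intro a b
  rw [conv_tmul]
  have key : ∀ y z : H ⊗[k] H,
      (LinearMap.mul' k H) ((TensorProduct.map W.Phi (LinearMap.mul' k H))
        ((TensorProduct.tensorTensorTensorComm k H H H H) (y ⊗ₜ[k] z))) =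
      (LinearMap.mul' k H) ((LinearMap.rTensor H W.antipode) (y * z)) := by
    intro y z
    induction y using TensorProduct.induction_on with
    | zero => simp [zero_mul]
    | tmul p q =>
      induction z using TensorProduct.induction_on with
      | zero => simp [mul_zero]
      | tmul c d => simp [Algebra.TensorProduct.tmul_mul_tmul, Phi_tmul]
      | add u v hu hv =>
        simp only [map_add, add_mul, mul_add, TensorProduct.add_tmul, TensorProduct.tmul_add,
          hu, hv]
    | add u v hu hv =>
      simp only [map_add, add_mul, mul_add, TensorProduct.add_tmul, TensorProduct.tmul_add,
        hu, hv]
  rw [key, ← W.comul_mul, W.antipode_left' (a*b)]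
  simp

lemma conv_mul_Phi : W.conv (LinearMap.mul' k H) W.Phi = W.εt ∘ₗ LinearMap.mul' k H := by
  apply TensorProduct.ext'
  intro a b
  rw [conv_tmul]
  have key : ∀ y z : H ⊗[k] H,
      (LinearMap.mul' k H) ((TensorProduct.map (LinearMap.mul' k H) W.Phi)
        ((TensorProduct.tensorTensorTensorComm k H H H H) (y ⊗ₜ[k] z))) =
      (LinearMap.mul' k H) ((LinearMap.lTensor H W.antipode) (y * z)) := by
    intro y z
    induction y using TensorProduct.induction_on with
    | zero => simp [zero_mul]
    | tmul p q =>
      induction z using TensorProduct.induction_on with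
      | zero => simp [mul_zero]
      | tmul c d => simp [Algebra.TensorProduct.tmul_mul_tmul, Phi_tmul]
      | add u v hu hv =>
        simp only [map_add, add_mul, mul_add, TensorProduct.add_tmul, TensorProduct.tmul_add,
          hu, hv]
    | add u v hu hv =>
      simp only [map_add, add_mul, mul_add, TensorProduct.add_tmul, TensorProduct.tmul_add,
        hu, hv]
  rw [key, ← W.comul_mul, W.antipode_right' (a*b)]
  simp

lemma comul_mul_et (a b : H) :
    W.comul (a * W.εt b) = W.comul a * (W.εt b ⊗ₜ[k] (1:H)) := by
  rw [W.comul_mul, W.comul_et, ← mul_assoc, W.comul_mul_one]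

lemma comul_es_mul (a b : H) :
    W.comul (W.εs a * b) = ((1:H) ⊗ₜ[k] W.εs a) * W.comul b := by
  rw [W.comul_mul, W.comul_es, mul_assoc, W.comul_one_mul]

lemma conv_mul_Psi : W.conv (LinearMap.mul' k H) W.Psi = W.εt ∘ₗ LinearMap.mul' k H := by
  apply TensorProduct.ext'
  intro a b
  rw [conv_tmul]
  have St1 : ∀ y z : H ⊗[k] H,
      (LinearMap.mul' k H) ((TensorProduct.map (LinearMap.mul' k H) W.Psi)
        ((TensorProduct.tensorTensorTensorComm k H H H H) (y ⊗ₜ[k] z))) =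
      (LinearMap.mul' k H) ((LinearMap.lTensor H W.antipode)
        (y * (((LinearMap.mul' k H) ((LinearMap.lTensor H W.antipode) z)) ⊗ₜ[k] (1:H)))) := by
    intro y z
    induction y using TensorProduct.induction_on with
    | zero => simp [zero_mul]
    | tmul p q =>
      induction z using TensorProduct.induction_on with
      | zero => simp [mul_zero]
      | tmul c d => simp [Algebra.TensorProduct.tmul_mul_tmul, Psi_tmul, mul_assoc]
      | add u v hu hv =>
        simp only [map_add, add_mul, mul_add, TensorProduct.add_tmul, TensorProduct.tmul_add,
          hu, hv]
    | add u v hu hv =>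
      simp only [map_add, add_mul, mul_add, TensorProduct.add_tmul, TensorProduct.tmul_add,
        hu, hv]
  rw [St1, W.antipode_right' b, ← W.comul_mul_et a b, W.antipode_right' (a * W.εt b),
    W.et_et a b]
  simp

lemma conv_Psi_mul : W.conv W.Psi (LinearMap.mul' k H) = W.εs ∘ₗ LinearMap.mul' k H := by
  apply TensorProduct.ext'
  intro a b
  rw [conv_tmul]
  have St1 : ∀ y z : H ⊗[k] H,
      (LinearMap.mul' k H) ((TensorProduct.map W.Psi (LinearMap.mul' k H))
        ((TensorProduct.tensorTensorTensorComm k H H H H) (y ⊗ₜ[k] z))) =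
      (LinearMap.mul' k H) ((LinearMap.rTensor H W.antipode)
        (((1:H) ⊗ₜ[k] ((LinearMap.mul' k H) ((LinearMap.rTensor H W.antipode) y))) * z)) := by
    intro y z
    induction y using TensorProduct.induction_on with
    | zero => simp [zero_mul]
    | tmul p q =>
      induction z using TensorProduct.induction_on with
      | zero => simp [mul_zero]
      | tmul c d => simp [Algebra.TensorProduct.tmul_mul_tmul, Psi_tmul, mul_assoc]
      | add u v hu hv =>
        simp only [map_add, add_mul, mul_add, TensorProduct.add_tmul, TensorProduct.tmul_add,
          hu, hv]
    | add u v hu hv =>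
      simp only [map_add, add_mul, mul_add, TensorProduct.add_tmul, TensorProduct.tmul_add,
        hu, hv]
  rw [St1, W.antipode_left' a, ← W.comul_es_mul a b, W.antipode_left' (W.εs a * b),
    W.es_es a b]
  simp

/-- `Σ S(x₁)ε_t(x₂) = S(x)` -/
lemma SetS (x : H) :
    (LinearMap.mul' k H) ((TensorProduct.map W.antipode W.εt) (W.comul x)) =
      W.antipode x := by
  rw [← W.etm_eq]
  set P5 : H ⊗[k] (H ⊗[k] H) →ₗ[k] H :=
    LinearMap.mul' k H ∘ₗ TensorProduct.map W.antipode
      (LinearMap.mul' k H ∘ₗ LinearMap.lTensor H W.antipode) with hP5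
  have keyA : ∀ y : H ⊗[k] H,
      (LinearMap.mul' k H) ((TensorProduct.map W.antipode
        (LinearMap.mul' k H ∘ₗ LinearMap.lTensor H W.antipode ∘ₗ W.comul)) y) =
      P5 ((LinearMap.lTensor H W.comul) y) := by
    intro y
    induction y using TensorProduct.induction_on with
    | zero => simp
    | tmul p q => simp [hP5]
    | add u v hu hv => simp only [map_add, hu, hv]
  have keyB : ∀ y : H ⊗[k] H,
      P5 ((TensorProduct.assoc k H H H) ((LinearMap.rTensor H W.comul) y)) =
      (LinearMap.mul' k H) ((TensorProduct.map
        (LinearMap.mul' k H ∘ₗ LinearMap.rTensor H W.antipode ∘ₗ W.comul) W.antipode) y) := by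
    intro y
    induction y using TensorProduct.induction_on with
    | zero => simp
    | tmul p r =>
      have sub : ∀ w : H ⊗[k] H, P5 ((TensorProduct.assoc k H H H) (w ⊗ₜ[k] r)) =
          (LinearMap.mul' k H) ((LinearMap.rTensor H W.antipode) w) * W.antipode r := by
        intro w
        induction w using TensorProduct.induction_on with
        | zero => simp [zero_mul]
        | tmul s t => simp [hP5, mul_assoc]
        | add u v hu hv =>
          simp only [map_add, add_mul, TensorProduct.add_tmul, hu, hv]
      simp only [LinearMap.rTensor_tmul, sub (W.comul p), TensorProduct.map_tmul,
        LinearMap.mul'_apply, LinearMap.coe_comp, Function.comp_apply]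
    | add u v hu hv => simp only [map_add, hu, hv]
  rw [keyA (W.comul x), ← W.coassoc x, keyB (W.comul x)]
  exact W.antipode_conv x

/-- `Σ ε_s(x₁)S(x₂) = S(x)` -/
lemma ESS (x : H) :
    (LinearMap.mul' k H) ((TensorProduct.map W.εs W.antipode) (W.comul x)) =
      W.antipode x := by
  rw [← W.esm_eq]
  exact W.antipode_conv x

lemma conv_assoc (f g e : H ⊗[k] H →ₗ[k] H) :
    W.conv (W.conv f g) e = W.conv f (W.conv g e) := by
  set TL : ((H ⊗[k] H) ⊗[k] H) ⊗[k] ((H ⊗[k] H) ⊗[k] H) →ₗ[k] H :=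
    LinearMap.mul' k H ∘ₗ
      TensorProduct.map (LinearMap.mul' k H ∘ₗ TensorProduct.map f g ∘ₗ
        (TensorProduct.tensorTensorTensorComm k H H H H).toLinearMap) e ∘ₗ
      (TensorProduct.tensorTensorTensorComm k (H ⊗[k] H) H (H ⊗[k] H) H).toLinearMap with hTL
  set TR : (H ⊗[k] (H ⊗[k] H)) ⊗[k] (H ⊗[k] (H ⊗[k] H)) →ₗ[k] H :=
    LinearMap.mul' k H ∘ₗ
      TensorProduct.map f (LinearMap.mul' k H ∘ₗ TensorProduct.map g e ∘ₗ
        (TensorProduct.tensorTensorTensorComm k H H H H).toLinearMap) ∘ₗ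
      (TensorProduct.tensorTensorTensorComm k H (H ⊗[k] H) H (H ⊗[k] H)).toLinearMap with hTR
  have keyL : ∀ y z : H ⊗[k] H,
      (LinearMap.mul' k H) ((TensorProduct.map (W.conv f g) e)
        ((TensorProduct.tensorTensorTensorComm k H H H H) (y ⊗ₜ[k] z))) =
      TL (((LinearMap.rTensor H W.comul) y) ⊗ₜ[k] ((LinearMap.rTensor H W.comul) z)) := by
    intro y z
    induction y using TensorProduct.induction_on with
    | zero => simp only [TensorProduct.zero_tmul, TensorProduct.tmul_zero, map_zero]
    | tmul p q =>
      induction z using TensorProduct.induction_on with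
      | zero => simp only [TensorProduct.zero_tmul, TensorProduct.tmul_zero, map_zero]
      | tmul c d => simp [hTL, conv_tmul]
      | add u v hu hv =>
        simp only [map_add, TensorProduct.add_tmul, TensorProduct.tmul_add, hu, hv]
    | add u v hu hv =>
      simp only [map_add, TensorProduct.add_tmul, TensorProduct.tmul_add, hu, hv]
  have keyR : ∀ y z : H ⊗[k] H,
      (LinearMap.mul' k H) ((TensorProduct.map f (W.conv g e))
        ((TensorProduct.tensorTensorTensorComm k H H H H) (y ⊗ₜ[k] z))) =
      TR (((LinearMap.lTensor H W.comul) y) ⊗ₜ[k] ((LinearMap.lTensor H W.comul) z)) := by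
    intro y z
    induction y using TensorProduct.induction_on with
    | zero => simp only [TensorProduct.zero_tmul, TensorProduct.tmul_zero, map_zero]
    | tmul p q =>
      induction z using TensorProduct.induction_on with
      | zero => simp only [TensorProduct.zero_tmul, TensorProduct.tmul_zero, map_zero]
      | tmul c d => simp [hTR, conv_tmul]
      | add u v hu hv =>
        simp only [map_add, TensorProduct.add_tmul, TensorProduct.tmul_add, hu, hv]
    | add u v hu hv =>
      simp only [map_add, TensorProduct.add_tmul, TensorProduct.tmul_add, hu, hv]
  have bridge : ∀ X Y : (H ⊗[k] H) ⊗[k] H,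
      TL (X ⊗ₜ[k] Y) =
      TR (((TensorProduct.assoc k H H H) X) ⊗ₜ[k] ((TensorProduct.assoc k H H H) Y)) := by
    intro X Y
    induction X using TensorProduct.induction_on with
    | zero => simp only [TensorProduct.zero_tmul, TensorProduct.tmul_zero, map_zero]
    | tmul ξ r =>
      induction ξ using TensorProduct.induction_on with
      | zero => simp only [TensorProduct.zero_tmul, TensorProduct.tmul_zero, map_zero]
      | tmul p' q' =>
        induction Y using TensorProduct.induction_on with
        | zero => simp only [TensorProduct.zero_tmul, TensorProduct.tmul_zero, map_zero]
        | tmul ζ s =>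
          induction ζ using TensorProduct.induction_on with
          | zero => simp only [TensorProduct.zero_tmul, TensorProduct.tmul_zero, map_zero]
          | tmul c' d' => simp [hTL, hTR, mul_assoc]
          | add u v hu hv =>
            simp only [map_add, TensorProduct.add_tmul, TensorProduct.tmul_add, hu, hv]
        | add u v hu hv =>
          simp only [map_add, TensorProduct.add_tmul, TensorProduct.tmul_add, hu, hv]
      | add u v hu hv =>
        simp only [map_add, TensorProduct.add_tmul, TensorProduct.tmul_add, hu, hv]
    | add u v hu hv =>
      simp only [map_add, TensorProduct.add_tmul, TensorProduct.tmul_add, hu, hv]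
  apply TensorProduct.ext'
  intro a b
  rw [conv_tmul, conv_tmul, keyL (W.comul a) (W.comul b), keyR (W.comul a) (W.comul b),
    bridge, W.coassoc a, W.coassoc b]

end Antimult

end WeakHopfAlgebra

namespace WeakHopfAlgebra

section Antimult2

variable {k H : Type*} [CommRing k] [Ring H] [Algebra k H] (W : WeakHopfAlgebra k H)

noncomputable def iota1 : H →ₗ[k] H ⊗[k] H := (TensorProduct.mk k H H).flip 1

lemma iota1_apply (x : H) : (iota1 (k := k) (H := H)) x = x ⊗ₜ[k] (1:H) := rfl

/-- `EXP (q ⊗ d) = Σ q₁ ε_t(d) S(q₂)` -/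
noncomputable def EXP : H ⊗[k] H →ₗ[k] H :=
  LinearMap.mul' k H ∘ₗ LinearMap.lTensor H W.antipode ∘ₗ LinearMap.mul' k (H ⊗[k] H) ∘ₗ
    TensorProduct.map W.comul (iota1 ∘ₗ W.εt)

lemma hNE : W.εt ∘ₗ LinearMap.mul' k H = W.EXP := by
  apply TensorProduct.ext'
  intro q d
  simp only [EXP, LinearMap.coe_comp, Function.comp_apply, LinearMap.mul'_apply,
    TensorProduct.map_tmul, iota1_apply]
  rw [← W.comul_mul_et q d, W.antipode_right' (q * W.εt d), W.et_et q d]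

/-- `EXP2 (w ⊗ d) = Σ (w (ε_t(d) ⊗ 1))` multiplied out with antipode on the right leg -/
noncomputable def EXP2 : (H ⊗[k] H) ⊗[k] H →ₗ[k] H :=
  LinearMap.mul' k H ∘ₗ LinearMap.lTensor H W.antipode ∘ₗ LinearMap.mul' k (H ⊗[k] H) ∘ₗ
    LinearMap.lTensor (H ⊗[k] H) (iota1 ∘ₗ W.εt)

noncomputable def Gam1 : (H ⊗[k] (H ⊗[k] H)) ⊗[k] (H ⊗[k] H) →ₗ[k] H :=
  LinearMap.mul' k H ∘ₗ TensorProduct.map W.Psi W.EXP2 ∘ₗ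
    (TensorProduct.tensorTensorTensorComm k H (H ⊗[k] H) H H).toLinearMap

noncomputable def esmm : H ⊗[k] H →ₗ[k] H :=
  LinearMap.mul' k H ∘ₗ LinearMap.rTensor H W.antipode

noncomputable def Gam2 : ((H ⊗[k] H) ⊗[k] H) ⊗[k] (H ⊗[k] H) →ₗ[k] H :=
  LinearMap.mul' k H ∘ₗ
    TensorProduct.map (LinearMap.mul' k H ∘ₗ (TensorProduct.comm k H H).toLinearMap)
      (LinearMap.mul' k H ∘ₗ (TensorProduct.comm k H H).toLinearMap) ∘ₗ
    (TensorProduct.tensorTensorTensorComm k H H H H).toLinearMap ∘ₗ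
    TensorProduct.map (TensorProduct.map W.esmm W.antipode)
      (TensorProduct.map W.antipode W.εt)

lemma keyS4 : ∀ y z : H ⊗[k] H,
    (LinearMap.mul' k H) ((TensorProduct.map W.Psi W.EXP)
      ((TensorProduct.tensorTensorTensorComm k H H H H) (y ⊗ₜ[k] z))) =
    W.Gam1 (((LinearMap.lTensor H W.comul) y) ⊗ₜ[k] z) := by
  intro y z
  induction y using TensorProduct.induction_on with
  | zero => simp only [TensorProduct.zero_tmul, TensorProduct.tmul_zero, map_zero]
  | tmul p q =>
    induction z using TensorProduct.induction_on with
    | zero => simp only [TensorProduct.zero_tmul, TensorProduct.tmul_zero, map_zero]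
    | tmul c d => simp [Gam1, EXP, EXP2]
    | add u v hu hv =>
      simp only [map_add, TensorProduct.add_tmul, TensorProduct.tmul_add, hu, hv]
  | add u v hu hv =>
    simp only [map_add, TensorProduct.add_tmul, TensorProduct.tmul_add, hu, hv]

lemma keyS6 : ∀ (X : (H ⊗[k] H) ⊗[k] H) (z : H ⊗[k] H),
    W.Gam1 (((TensorProduct.assoc k H H H) X) ⊗ₜ[k] z) = W.Gam2 (X ⊗ₜ[k] z) := by
  intro X z
  induction X using TensorProduct.induction_on with
  | zero => simp only [TensorProduct.zero_tmul, TensorProduct.tmul_zero, map_zero]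
  | tmul ξ r =>
    induction ξ using TensorProduct.induction_on with
    | zero => simp only [TensorProduct.zero_tmul, TensorProduct.tmul_zero, map_zero]
    | tmul s t =>
      induction z using TensorProduct.induction_on with
      | zero => simp only [TensorProduct.zero_tmul, TensorProduct.tmul_zero, map_zero]
      | tmul c d => simp [Gam1, Gam2, EXP2, esmm, iota1_apply, Psi_tmul,
          Algebra.TensorProduct.tmul_mul_tmul, mul_assoc]
      | add u v hu hv =>
        simp only [map_add, TensorProduct.add_tmul, TensorProduct.tmul_add, hu, hv]
    | add u v hu hv =>
      simp only [map_add, TensorProduct.add_tmul, TensorProduct.tmul_add, hu, hv]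
  | add u v hu hv =>
    simp only [map_add, TensorProduct.add_tmul, TensorProduct.tmul_add, hu, hv]

lemma keyS7 : ∀ y z : H ⊗[k] H,
    W.Gam2 (((LinearMap.rTensor H W.comul) y) ⊗ₜ[k] z) =
    (LinearMap.mul' k H) ((TensorProduct.map W.antipode W.εt) z) *
      (LinearMap.mul' k H) ((TensorProduct.map W.εs W.antipode) y) := by
  intro y z
  induction y using TensorProduct.induction_on with
  | zero => simp only [TensorProduct.zero_tmul, TensorProduct.tmul_zero, map_zero, mul_zero]
  | tmul p r =>
    induction z using TensorProduct.induction_on with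
    | zero => simp only [TensorProduct.zero_tmul, TensorProduct.tmul_zero, map_zero, zero_mul]
    | tmul c d =>
      have hes : W.esmm (W.comul p) = W.εs p := W.antipode_left' p
      simp only [Gam2, LinearMap.rTensor_tmul, TensorProduct.map_tmul, hes,
        LinearMap.coe_comp, Function.comp_apply, LinearEquiv.coe_coe,
        TensorProduct.tensorTensorTensorComm_tmul, TensorProduct.comm_tmul,
        LinearMap.mul'_apply, mul_assoc]
      rw [← mul_assoc (W.εs p), W.es_et_comm p d, mul_assoc]
    | add u v hu hv =>
      simp only [map_add, TensorProduct.add_tmul, TensorProduct.tmul_add, hu, hv, mul_add,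
        add_mul]
  | add u v hu hv =>
    simp only [map_add, TensorProduct.add_tmul, TensorProduct.tmul_add, hu, hv, mul_add,
      add_mul]

lemma conv_Psi_etm : W.conv W.Psi (W.εt ∘ₗ LinearMap.mul' k H) = W.Psi := by
  apply TensorProduct.ext'
  intro a b
  rw [conv_tmul, W.hNE, W.keyS4 (W.comul a) (W.comul b), ← W.coassoc a, W.keyS6,
    W.keyS7 (W.comul a) (W.comul b), W.SetS, W.ESS, W.Psi_tmul]

lemma conv_Phi_etm : W.conv W.Phi (W.εt ∘ₗ LinearMap.mul' k H) = W.Phi := by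
  apply TensorProduct.ext'
  intro a b
  rw [conv_tmul]
  have key : ∀ y z : H ⊗[k] H,
      (LinearMap.mul' k H) ((TensorProduct.map W.Phi (W.εt ∘ₗ LinearMap.mul' k H))
        ((TensorProduct.tensorTensorTensorComm k H H H H) (y ⊗ₜ[k] z))) =
      (LinearMap.mul' k H) ((TensorProduct.map W.antipode W.εt) (y * z)) := by
    intro y z
    induction y using TensorProduct.induction_on with
    | zero => simp only [TensorProduct.zero_tmul, TensorProduct.tmul_zero, map_zero, zero_mul]
    | tmul p q =>
      induction z using TensorProduct.induction_on with
      | zero => simp only [TensorProduct.zero_tmul, TensorProduct.tmul_zero, map_zero, mul_zero]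
      | tmul c d => simp [Algebra.TensorProduct.tmul_mul_tmul, Phi_tmul]
      | add u v hu hv =>
        simp only [map_add, TensorProduct.add_tmul, TensorProduct.tmul_add, hu, hv,
          mul_add, add_mul]
    | add u v hu hv =>
      simp only [map_add, TensorProduct.add_tmul, TensorProduct.tmul_add, hu, hv,
        mul_add, add_mul]
  rw [key, ← W.comul_mul, W.SetS, W.Phi_tmul]

lemma Phi_eq_Psi : W.Phi = W.Psi := by
  calc W.Phi = W.conv W.Phi (W.εt ∘ₗ LinearMap.mul' k H) := W.conv_Phi_etm.symm
  _ = W.conv W.Phi (W.conv (LinearMap.mul' k H) W.Psi) := by rw [W.conv_mul_Psi]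
  _ = W.conv (W.conv W.Phi (LinearMap.mul' k H)) W.Psi := (W.conv_assoc _ _ _).symm
  _ = W.conv (W.εs ∘ₗ LinearMap.mul' k H) W.Psi := by rw [W.conv_Phi_mul]
  _ = W.conv (W.conv W.Psi (LinearMap.mul' k H)) W.Psi := by rw [W.conv_Psi_mul]
  _ = W.conv W.Psi (W.conv (LinearMap.mul' k H) W.Psi) := W.conv_assoc _ _ _
  _ = W.conv W.Psi (W.εt ∘ₗ LinearMap.mul' k H) := by rw [W.conv_mul_Psi]
  _ = W.Psi := W.conv_Psi_etm

/-- the antipode is antimultiplicative -/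
lemma antimult (a b : H) : W.antipode (a * b) = W.antipode b * W.antipode a := by
  have h := congrArg (fun f : H ⊗[k] H →ₗ[k] H => f (a ⊗ₜ[k] b)) W.Phi_eq_Psi
  simpa [Phi_tmul, Psi_tmul] using h

end Antimult2

end WeakHopfAlgebra

namespace WeakHopfAlgebra

section QT

variable {k H : Type*} [CommRing k] [Ring H] [Algebra k H] (W : WeakHopfAlgebra k H)

/-- `κ(a ⊗ b) = S(b)a` -/
noncomputable def kap : H ⊗[k] H →ₗ[k] H :=
  LinearMap.mul' k H ∘ₗ LinearMap.rTensor H W.antipode ∘ₗ (TensorProduct.comm k H H).toLinearMap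

lemma kap_tmul (a b : H) : W.kap (a ⊗ₜ[k] b) = W.antipode b * a := by simp [kap]

/-- `SandS c (p ⊗ q) = S(q) c p` -/
noncomputable def SandS (c : H) : H ⊗[k] H →ₗ[k] H :=
  LinearMap.mul' k H ∘ₗ
    TensorProduct.map (LinearMap.mulRight k c ∘ₗ W.antipode) LinearMap.id ∘ₗ
    (TensorProduct.comm k H H).toLinearMap

lemma SandS_tmul (c p q : H) : W.SandS c (p ⊗ₜ[k] q) = W.antipode q * c * p := by simp [SandS]

lemma kap_mul (x y : H ⊗[k] H) : W.kap (x * y) = W.SandS (W.kap x) y := by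
  induction x using TensorProduct.induction_on with
  | zero => simp [zero_mul, SandS]
  | tmul a b =>
    induction y using TensorProduct.induction_on with
    | zero => simp [mul_zero]
    | tmul c d =>
      simp [Algebra.TensorProduct.tmul_mul_tmul, kap_tmul, SandS_tmul, W.antimult, mul_assoc]
    | add u v hu hv => simp only [map_add, mul_add, hu, hv]
  | add u v hu hv =>
    have hS : ∀ c c' : H, ∀ w : H ⊗[k] H, W.SandS (c + c') w = W.SandS c w + W.SandS c' w := by
      intro c c' w
      induction w using TensorProduct.induction_on with
      | zero => simp
      | tmul p q => simp [SandS_tmul, mul_add, add_mul]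
      | add s t hs ht => simp only [map_add, hs, ht]; abel
    simp only [map_add, add_mul, hu, hv, hS]

lemma SandS_comm_comul (h : H) :
    W.kap ((TensorProduct.comm k H H) (W.comul h)) = W.εs h := by
  have key : ∀ x : H ⊗[k] H, W.kap ((TensorProduct.comm k H H) x) =
      (LinearMap.mul' k H) ((LinearMap.rTensor H W.antipode) x) := by
    intro x
    induction x using TensorProduct.induction_on with
    | zero => simp
    | tmul a b => simp [kap_tmul]
    | add u v hu hv => simp only [map_add, hu, hv]
  rw [key, W.antipode_left' h]

variable (R Rbar : H ⊗[k] H)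

lemma R_mul_D1
    (hR_corner : (TensorProduct.comm k H H) (W.comul 1) * R * W.comul 1 = R)
    (h_RRbar : R * Rbar = (TensorProduct.comm k H H) (W.comul 1))
    (h_RbarR : Rbar * R = W.comul 1) :
    R * W.comul 1 = R := by
  have h1 : (TensorProduct.comm k H H) (W.comul 1) * R = R * W.comul 1 := by
    rw [← h_RRbar, mul_assoc, h_RbarR]
  have h2 : R * W.comul 1 * W.comul 1 = R := by rw [← h1]; exact hR_corner
  rw [mul_assoc, W.comul_one_mul 1] at h2
  exact h2

lemma D1op_mul_R
    (hR_corner : (TensorProduct.comm k H H) (W.comul 1) * R * W.comul 1 = R)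
    (h_RRbar : R * Rbar = (TensorProduct.comm k H H) (W.comul 1))
    (h_RbarR : Rbar * R = W.comul 1) :
    (TensorProduct.comm k H H) (W.comul 1) * R = R := by
  have h1 : (TensorProduct.comm k H H) (W.comul 1) * R = R * W.comul 1 := by
    rw [← h_RRbar, mul_assoc, h_RbarR]
  rw [h1, W.R_mul_D1 R Rbar hR_corner h_RRbar h_RbarR]

/-- the contraction `(id ⊗ ε)` -/
noncomputable def deps : H ⊗[k] H →ₗ[k] H :=
  (TensorProduct.rid k H).toLinearMap ∘ₗ LinearMap.lTensor H W.counit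

lemma deps_tmul (a b : H) : W.deps (a ⊗ₜ[k] b) = W.counit b • a := by simp [deps]

/-- `(id ⊗ ε)(R) = 1` -/
lemma deps_R
    (hR_corner : (TensorProduct.comm k H H) (W.comul 1) * R * W.comul 1 = R)
    (h_lTensor : (LinearMap.lTensor H W.comul) R = leg13 k H R * leg12 k H R)
    (h_RRbar : R * Rbar = (TensorProduct.comm k H H) (W.comul 1))
    (h_RbarR : Rbar * R = W.comul 1) :
    W.deps R = 1 := by
  set th : H ⊗[k] (H ⊗[k] H) →ₗ[k] H ⊗[k] H :=
    LinearMap.lTensor H ((TensorProduct.rid k H).toLinearMap ∘ₗ LinearMap.lTensor H W.counit)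
    with hth
  have e1 : ∀ x : H ⊗[k] H, th ((LinearMap.lTensor H W.comul) x) = x := by
    intro x
    induction x using TensorProduct.induction_on with
    | zero => simp
    | tmul a b =>
      simp only [hth, LinearMap.lTensor_tmul, LinearMap.coe_comp, LinearEquiv.coe_coe,
        Function.comp_apply]
      rw [W.counit_rid b]
    | add u v hu hv => simp only [map_add, hu, hv]
  have e2 : ∀ x y : H ⊗[k] H, th (leg13 k H x * leg12 k H y) =
      ((W.deps x) ⊗ₜ[k] (1:H)) * y := by
    intro x y
    induction x using TensorProduct.induction_on with
    | zero => simp [zero_mul]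
    | tmul a b =>
      induction y using TensorProduct.induction_on with
      | zero => simp [mul_zero]
      | tmul c d =>
        simp [hth, leg13_tmul, leg12_tmul, Algebra.TensorProduct.tmul_mul_tmul, deps_tmul,
          TensorProduct.tmul_smul, TensorProduct.smul_tmul', smul_mul_assoc]
      | add u v hu hv =>
        simp only [map_add, mul_add, hu, hv]
    | add u v hu hv =>
      simp only [map_add, add_mul, hu, hv, TensorProduct.add_tmul]
  have h3 : R = ((W.deps R) ⊗ₜ[k] (1:H)) * R := by
    conv_lhs => rw [← e1 R, h_lTensor, e2]
  have h4 : (TensorProduct.comm k H H) (W.comul 1) =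
      ((W.deps R) ⊗ₜ[k] (1:H)) * ((TensorProduct.comm k H H) (W.comul 1)) := by
    conv_lhs => rw [← h_RRbar, h3]
    rw [mul_assoc, h_RRbar]
  have e3 : W.deps ((TensorProduct.comm k H H) (W.comul 1)) = 1 := by
    have key : ∀ z : H ⊗[k] H, W.deps ((TensorProduct.comm k H H) z) =
        (TensorProduct.lid k H) ((LinearMap.rTensor H W.counit) z) := by
      intro z
      induction z using TensorProduct.induction_on with
      | zero => simp
      | tmul p q => simp [deps_tmul]
      | add u v hu hv => simp only [map_add, hu, hv]
    rw [key, W.counit_lid 1]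
  have e4 : ∀ (c : H) (z : H ⊗[k] H), W.deps ((c ⊗ₜ[k] (1:H)) * z) = c * W.deps z := by
    intro c z
    induction z using TensorProduct.induction_on with
    | zero => simp
    | tmul p q => simp [Algebra.TensorProduct.tmul_mul_tmul, deps_tmul, mul_smul_comm]
    | add u v hu hv => simp only [map_add, mul_add, hu, hv]
  have := congrArg W.deps h4
  rw [e3, e4, e3, mul_one] at this
  exact this.symm

noncomputable def iota2 : H →ₗ[k] H ⊗[k] H := TensorProduct.mk k H H 1

lemma iota2_apply (x : H) : (iota2 (k := k) (H := H)) x = (1:H) ⊗ₜ[k] x := rfl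

/-- `sandw x z = Σ (z₁ ⊗ 1) x (1 ⊗ S(z₂))` -/
noncomputable def sandw (x : H ⊗[k] H) : H ⊗[k] H →ₗ[k] H ⊗[k] H :=
  LinearMap.mul' k (H ⊗[k] H) ∘ₗ LinearMap.rTensor (H ⊗[k] H) (LinearMap.mulRight k x) ∘ₗ
    TensorProduct.map iota1 (iota2 ∘ₗ W.antipode)

lemma sandw_tmul (x : H ⊗[k] H) (p q : H) :
    W.sandw x (p ⊗ₜ[k] q) =
      (p ⊗ₜ[k] (1:H)) * x * ((1:H) ⊗ₜ[k] W.antipode q) := by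
  simp [sandw, iota1_apply, iota2_apply, mul_assoc]

/-- `G3 x (a ⊗ (b ⊗ c)) = (b ⊗ a) x (1 ⊗ S c)` -/
noncomputable def G3 (x : H ⊗[k] H) : H ⊗[k] (H ⊗[k] H) →ₗ[k] H ⊗[k] H :=
  LinearMap.mul' k (H ⊗[k] H) ∘ₗ LinearMap.rTensor (H ⊗[k] H) (LinearMap.mulRight k x) ∘ₗ
    LinearMap.lTensor (H ⊗[k] H) (iota2 ∘ₗ W.antipode) ∘ₗ
    LinearMap.rTensor H (TensorProduct.comm k H H).toLinearMap ∘ₗ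
    (TensorProduct.assoc k H H H).symm.toLinearMap

lemma G3_tmul (x : H ⊗[k] H) (a b c : H) :
    W.G3 x (a ⊗ₜ[k] (b ⊗ₜ[k] c)) = (b ⊗ₜ[k] a) * x * ((1:H) ⊗ₜ[k] W.antipode c) := by
  simp [G3, iota2_apply, mul_assoc]

lemma sandw_xzero : ∀ z : H ⊗[k] H, W.sandw 0 z = 0 := by
  intro z
  induction z using TensorProduct.induction_on with
  | zero => simp
  | tmul p q => simp [sandw_tmul]
  | add u v hu hv => simp only [map_add, hu, hv, add_zero]

lemma sandw_xadd : ∀ (x y : H ⊗[k] H) (z : H ⊗[k] H),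
    W.sandw (x + y) z = W.sandw x z + W.sandw y z := by
  intro x y z
  induction z using TensorProduct.induction_on with
  | zero => simp
  | tmul p q => simp [sandw_tmul, mul_add, add_mul]
  | add u v hu hv => simp only [map_add, hu, hv]; abel

lemma st2 : ∀ (z w x : H ⊗[k] H), W.sandw ((TensorProduct.comm k H H) w * x) z =
    W.G3 x (leg23 k H z * leg12 k H w) := by
  intro z w x
  induction z using TensorProduct.induction_on with
  | zero => simp [zero_mul]
  | tmul p q =>
    induction w using TensorProduct.induction_on with
    | zero => simp [W.sandw_xzero]
    | tmul c d =>
      simp only [sandw_tmul, TensorProduct.comm_tmul, leg23_apply, leg12_tmul,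
        Algebra.TensorProduct.tmul_mul_tmul, G3_tmul, one_mul, mul_one]
      rw [← mul_assoc, Algebra.TensorProduct.tmul_mul_tmul, one_mul]
    | add u v hu hv =>
      simp only [map_add, add_mul, mul_add, TensorProduct.add_tmul, TensorProduct.tmul_add,
        hu, hv, W.sandw_xadd]
  | add u v hu hv =>
    simp only [map_add, add_mul, mul_add, TensorProduct.add_tmul, TensorProduct.tmul_add,
      hu, hv]

/-- `nu (p ⊗ q) = Δ(p)(1 ⊗ S q)` -/
noncomputable def nud : H ⊗[k] H →ₗ[k] H ⊗[k] H :=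
  LinearMap.mul' k (H ⊗[k] H) ∘ₗ TensorProduct.map W.comul (iota2 ∘ₗ W.antipode)

lemma nud_tmul (p q : H) :
    W.nud (p ⊗ₜ[k] q) = W.comul p * ((1:H) ⊗ₜ[k] W.antipode q) := by
  simp [nud, iota2_apply]

lemma st4 (h_intertwine : ∀ h : H, (TensorProduct.comm k H H) (W.comul h) * R = R * W.comul h) :
    ∀ z : H ⊗[k] H, W.G3 R ((TensorProduct.assoc k H H H) ((LinearMap.rTensor H W.comul) z)) =
      R * W.nud z := by
  intro z
  induction z using TensorProduct.induction_on with
  | zero => simp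
  | tmul p q =>
    have sub : ∀ w : H ⊗[k] H, W.G3 R ((TensorProduct.assoc k H H H) (w ⊗ₜ[k] q)) =
        (TensorProduct.comm k H H) w * R * ((1:H) ⊗ₜ[k] W.antipode q) := by
      intro w
      induction w using TensorProduct.induction_on with
      | zero => simp [zero_mul]
      | tmul s t => simp [G3_tmul]
      | add u v hu hv =>
        simp only [map_add, add_mul, TensorProduct.add_tmul, hu, hv]
    simp only [LinearMap.rTensor_tmul, sub (W.comul p), h_intertwine p, nud_tmul, mul_assoc]
  | add u v hu hv => simp only [map_add, mul_add, hu, hv]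

lemma st5 : ∀ h : H, W.nud (W.comul h) = (LinearMap.lTensor H W.εt) (W.comul h) := by
  intro h
  have claim : ∀ x : H ⊗[k] H, W.nud x =
      (LinearMap.mul' k (H ⊗[k] H) ∘ₗ LinearMap.lTensor (H ⊗[k] H) (iota2 ∘ₗ W.antipode))
        ((LinearMap.rTensor H W.comul) x) := by
    intro x
    induction x using TensorProduct.induction_on with
    | zero => simp
    | tmul p q => simp [nud_tmul, iota2_apply]
    | add u v hu hv => simp only [map_add, hu, hv]
  have claim2 : ∀ t : H ⊗[k] (H ⊗[k] H),
      (LinearMap.mul' k (H ⊗[k] H) ∘ₗ LinearMap.lTensor (H ⊗[k] H) (iota2 ∘ₗ W.antipode))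
        ((TensorProduct.assoc k H H H).symm t) =
      (LinearMap.lTensor H (LinearMap.mul' k H ∘ₗ LinearMap.lTensor H W.antipode)) t := by
    intro t
    induction t using TensorProduct.induction_on with
    | zero => simp
    | tmul a w =>
      induction w using TensorProduct.induction_on with
      | zero => simp
      | tmul b c => simp [iota2_apply, Algebra.TensorProduct.tmul_mul_tmul]
      | add u v hu hv => simp only [map_add, TensorProduct.tmul_add, hu, hv]
    | add u v hu hv => simp only [map_add, hu, hv]
  have hco : (LinearMap.rTensor H W.comul) (W.comul h) =
      (TensorProduct.assoc k H H H).symm ((LinearMap.lTensor H W.comul) (W.comul h)) := by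
    rw [← W.coassoc h, LinearEquiv.symm_apply_apply]
  rw [claim, hco, claim2, ← LinearMap.comp_apply, ← LinearMap.lTensor_comp]
  have : (LinearMap.mul' k H ∘ₗ LinearMap.lTensor H W.antipode) ∘ₗ W.comul = W.εt := W.etm_eq
  rw [this]

/-- the key identity `Σ (1₁ ⊗ 1) R (1 ⊗ S(1₂)) = R` -/
lemma Xp
    (hR_corner : (TensorProduct.comm k H H) (W.comul 1) * R * W.comul 1 = R)
    (h_intertwine : ∀ h : H, (TensorProduct.comm k H H) (W.comul h) * R = R * W.comul h)
    (h_RRbar : R * Rbar = (TensorProduct.comm k H H) (W.comul 1))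
    (h_RbarR : Rbar * R = W.comul 1) :
    W.sandw R (W.comul 1) = R := by
  conv_lhs => rw [← W.D1op_mul_R R Rbar hR_corner h_RRbar h_RbarR]
  rw [W.st2 (W.comul 1) (W.comul 1) R, ← W.wco_right, ← W.coassoc 1,
    W.st4 R h_intertwine (W.comul 1), W.st5 1, W.seven_a 1,
    ← Algebra.TensorProduct.one_def, mul_one,
    W.R_mul_D1 R Rbar hR_corner h_RRbar h_RbarR]

end QT

end WeakHopfAlgebra

namespace WeakHopfAlgebra

section Main

variable {k H : Type*} [CommRing k] [Ring H] [Algebra k H] (W : WeakHopfAlgebra k H)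
variable (R Rbar : H ⊗[k] H)

lemma Tid (h_intertwine : ∀ h : H, (TensorProduct.comm k H H) (W.comul h) * R = R * W.comul h)
    (h : H) : W.SandS (W.kap R) (W.comul h) = W.SandS (W.εs h) R := by
  have e := congrArg W.kap (h_intertwine h)
  rw [W.kap_mul, W.kap_mul, W.SandS_comm_comul h] at e
  exact e.symm

lemma M4
    (hR_corner : (TensorProduct.comm k H H) (W.comul 1) * R * W.comul 1 = R)
    (h_RRbar : R * Rbar = (TensorProduct.comm k H H) (W.comul 1))
    (h_RbarR : Rbar * R = W.comul 1) :
    W.SandS (W.kap R) (W.comul 1) = W.kap R := by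
  rw [← W.kap_mul R (W.comul 1), W.R_mul_D1 R Rbar hR_corner h_RRbar h_RbarR]

lemma main_rel
    (hR_corner : (TensorProduct.comm k H H) (W.comul 1) * R * W.comul 1 = R)
    (h_intertwine : ∀ h : H, (TensorProduct.comm k H H) (W.comul h) * R = R * W.comul h)
    (h_RRbar : R * Rbar = (TensorProduct.comm k H H) (W.comul 1))
    (h_RbarR : Rbar * R = W.comul 1) :
    ∀ h : H, W.kap R * h = W.antipode (W.antipode h) * W.kap R := by
  intro h
  set u := W.kap R with hu
  -- route 1 : the expression equals u * h
  have r1 : ∀ x : H ⊗[k] H,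
      (LinearMap.mul' k H) ((TensorProduct.map (W.antipode ∘ₗ W.antipode)
        (W.SandS u ∘ₗ W.comul)) ((TensorProduct.comm k H H) x)) =
      (LinearMap.mul' k H) ((TensorProduct.map (W.antipode ∘ₗ W.antipode) (W.SandS u))
        ((TensorProduct.comm k (H ⊗[k] H) H) ((LinearMap.rTensor H W.comul) x))) := by
    intro x
    induction x using TensorProduct.induction_on with
    | zero => simp
    | tmul p q => simp
    | add a b ha hb => simp only [map_add, ha, hb]
  have r2 : (LinearMap.rTensor H W.comul) (W.comul h) =
      (TensorProduct.assoc k H H H).symm ((LinearMap.lTensor H W.comul) (W.comul h)) := by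
    rw [← W.coassoc h, LinearEquiv.symm_apply_apply]
  have r3 : ∀ t : H ⊗[k] (H ⊗[k] H),
      (LinearMap.mul' k H) ((TensorProduct.map (W.antipode ∘ₗ W.antipode) (W.SandS u))
        ((TensorProduct.comm k (H ⊗[k] H) H) ((TensorProduct.assoc k H H H).symm t))) =
      W.SandS u ((LinearMap.lTensor H
        (LinearMap.mul' k H ∘ₗ LinearMap.lTensor H W.antipode)) t) := by
    intro t
    induction t using TensorProduct.induction_on with
    | zero => simp
    | tmul a w =>
      induction w using TensorProduct.induction_on with
      | zero => simp [TensorProduct.tmul_zero]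
      | tmul b c => simp [SandS_tmul, W.antimult, mul_assoc]
      | add s t' hs ht => simp only [map_add, TensorProduct.tmul_add, hs, ht]
    | add s t' hs ht => simp only [map_add, hs, ht]
  have r4 : (LinearMap.lTensor H (LinearMap.mul' k H ∘ₗ LinearMap.lTensor H W.antipode))
      ((LinearMap.lTensor H W.comul) (W.comul h)) = W.comul 1 * (h ⊗ₜ[k] (1:H)) := by
    rw [← LinearMap.comp_apply, ← LinearMap.lTensor_comp, LinearMap.comp_assoc, W.etm_eq,
      W.seven_a h]
  have r5 : ∀ z : H ⊗[k] H, W.SandS u (z * (h ⊗ₜ[k] (1:H))) = W.SandS u z * h := by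
    intro z
    induction z using TensorProduct.induction_on with
    | zero => simp [zero_mul]
    | tmul p q => simp [Algebra.TensorProduct.tmul_mul_tmul, SandS_tmul, mul_assoc]
    | add s t hs ht => simp only [map_add, add_mul, hs, ht]
  have route1 :
      (LinearMap.mul' k H) ((TensorProduct.map (W.antipode ∘ₗ W.antipode)
        (W.SandS u ∘ₗ W.comul)) ((TensorProduct.comm k H H) (W.comul h))) = u * h := by
    rw [r1, r2, r3, r4, r5, W.M4 R Rbar hR_corner h_RRbar h_RbarR]
  -- route 2 : the expression equals S²(h) * u
  have sandS_kap : ∀ (c : H) (x : H ⊗[k] H), W.SandS c x = W.kap ((c ⊗ₜ[k] (1:H)) * x) := by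
    intro c x
    induction x using TensorProduct.induction_on with
    | zero => simp [mul_zero]
    | tmul p q => simp [Algebra.TensorProduct.tmul_mul_tmul, SandS_tmul, kap_tmul, mul_assoc]
    | add s t hs ht => simp only [map_add, mul_add, hs, ht]
  set SR : H →ₗ[k] H := W.kap ∘ₗ LinearMap.mulRight k R ∘ₗ iota1 with hSR
  have hSRc : ∀ c : H, SR c = W.kap ((c ⊗ₜ[k] (1:H)) * R) := by
    intro c; simp [hSR, iota1_apply]
  have R2a : ∀ x : H ⊗[k] H,
      (LinearMap.mul' k H) ((TensorProduct.map (W.antipode ∘ₗ W.antipode)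
        (W.SandS u ∘ₗ W.comul)) ((TensorProduct.comm k H H) x)) =
      (LinearMap.mul' k H) ((TensorProduct.map (W.antipode ∘ₗ W.antipode) SR)
        ((TensorProduct.comm k H H) ((LinearMap.rTensor H W.εs) x))) := by
    intro x
    induction x using TensorProduct.induction_on with
    | zero => simp
    | tmul p q =>
      simp only [TensorProduct.comm_tmul, TensorProduct.map_tmul, LinearMap.mul'_apply,
        LinearMap.coe_comp, Function.comp_apply, LinearMap.rTensor_tmul]
      rw [show W.SandS u (W.comul p) = W.SandS (W.εs p) R from W.Tid R h_intertwine p,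
        sandS_kap, ← hSRc]
    | add s t hs ht => simp only [map_add, hs, ht]
  have R2c : ∀ (z : H ⊗[k] H),
      (LinearMap.mul' k H) ((TensorProduct.map (W.antipode ∘ₗ W.antipode) SR)
        ((TensorProduct.comm k H H) (((1:H) ⊗ₜ[k] h) * z))) =
      W.antipode (W.antipode h) *
        (LinearMap.mul' k H) ((TensorProduct.map (W.antipode ∘ₗ W.antipode) SR)
          ((TensorProduct.comm k H H) z)) := by
    intro z
    induction z using TensorProduct.induction_on with
    | zero => simp
    | tmul c d =>
      simp only [Algebra.TensorProduct.tmul_mul_tmul, one_mul, TensorProduct.comm_tmul,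
        TensorProduct.map_tmul, LinearMap.mul'_apply, LinearMap.coe_comp,
        Function.comp_apply]
      rw [W.antimult h d, W.antimult (W.antipode d) (W.antipode h), mul_assoc]
    | add s t hs ht => simp only [map_add, mul_add, hs, ht]
  have kr : ∀ (x : H ⊗[k] H) (e : H),
      W.kap (x * ((1:H) ⊗ₜ[k] e)) = W.antipode e * W.kap x := by
    intro x e
    induction x using TensorProduct.induction_on with
    | zero => simp [zero_mul]
    | tmul p q => simp [Algebra.TensorProduct.tmul_mul_tmul, kap_tmul, W.antimult, mul_assoc]
    | add s t hs ht => simp only [map_add, add_mul, mul_add, hs, ht]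
  have R2d : ∀ z : H ⊗[k] H,
      (LinearMap.mul' k H) ((TensorProduct.map (W.antipode ∘ₗ W.antipode) SR)
        ((TensorProduct.comm k H H) z)) = W.kap (W.sandw R z) := by
    intro z
    induction z using TensorProduct.induction_on with
    | zero => simp
    | tmul c d =>
      simp only [TensorProduct.comm_tmul, TensorProduct.map_tmul, LinearMap.mul'_apply,
        LinearMap.coe_comp, Function.comp_apply, sandw_tmul]
      rw [mul_assoc ((c : H) ⊗ₜ[k] (1:H)) R, ← mul_assoc, mul_assoc (c ⊗ₜ[k] (1:H)),
        ← mul_assoc (c ⊗ₜ[k] (1:H)) R]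
      rw [kr ((c ⊗ₜ[k] (1:H)) * R) (W.antipode d), ← hSRc]
    | add s t hs ht => simp only [map_add, hs, ht]
  have route2 :
      (LinearMap.mul' k H) ((TensorProduct.map (W.antipode ∘ₗ W.antipode)
        (W.SandS u ∘ₗ W.comul)) ((TensorProduct.comm k H H) (W.comul h))) =
      W.antipode (W.antipode h) * u := by
    rw [R2a, W.seven_b h, R2c, R2d, W.Xp R Rbar hR_corner h_intertwine h_RRbar h_RbarR, hu]
  exact route1.symm.trans route2

lemma vu_one
    (hR_corner : (TensorProduct.comm k H H) (W.comul 1) * R * W.comul 1 = R)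
    (h_intertwine : ∀ h : H, (TensorProduct.comm k H H) (W.comul h) * R = R * W.comul h)
    (h_lTensor : (LinearMap.lTensor H W.comul) R = leg13 k H R * leg12 k H R)
    (h_RRbar : R * Rbar = (TensorProduct.comm k H H) (W.comul 1))
    (h_RbarR : Rbar * R = W.comul 1) :
    (LinearMap.mul' k H) ((LinearMap.lTensor H (W.antipode ∘ₗ W.antipode))
      ((TensorProduct.comm k H H) R)) * W.kap R = 1 := by
  set u := W.kap R with hu
  have hmain := W.main_rel R Rbar hR_corner h_intertwine h_RRbar h_RbarR
  have s1 : ∀ x : H ⊗[k] H,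
      (LinearMap.mul' k H) ((LinearMap.lTensor H (W.antipode ∘ₗ W.antipode))
        ((TensorProduct.comm k H H) x)) * u =
      (LinearMap.mul' k H) ((LinearMap.lTensor H (LinearMap.mulLeft k u))
        ((TensorProduct.comm k H H) x)) := by
    intro x
    induction x using TensorProduct.induction_on with
    | zero => simp
    | tmul a b =>
      simp only [TensorProduct.comm_tmul, LinearMap.lTensor_tmul, LinearMap.mul'_apply,
        LinearMap.coe_comp, Function.comp_apply, LinearMap.mulLeft_apply]
      rw [hmain a, ← mul_assoc]
    | add s t hs ht => simp only [map_add, add_mul, hs, ht]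
  set phi : H ⊗[k] (H ⊗[k] H) →ₗ[k] H :=
    LinearMap.mul' k H ∘ₗ (TensorProduct.comm k H H).toLinearMap ∘ₗ
      LinearMap.lTensor H (LinearMap.mul' k H ∘ₗ LinearMap.lTensor H W.antipode) with hphi
  have s3c : ∀ x y : H ⊗[k] H, phi (leg13 k H x * leg12 k H y) =
      (LinearMap.mul' k H) ((LinearMap.lTensor H (LinearMap.mulLeft k (W.kap x)))
        ((TensorProduct.comm k H H) y)) := by
    intro x y
    induction x using TensorProduct.induction_on with
    | zero => simp [zero_mul, kap]
    | tmul a b =>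
      induction y using TensorProduct.induction_on with
      | zero => simp [mul_zero]
      | tmul c d =>
        simp [hphi, leg13_tmul, leg12_tmul, Algebra.TensorProduct.tmul_mul_tmul, kap_tmul,
          mul_assoc]
      | add s t hs ht => simp only [map_add, mul_add, hs, ht]
    | add s t hs ht =>
      have hkap_add : ∀ (c c' : H) (w : H ⊗[k] H),
          (LinearMap.lTensor H (LinearMap.mulLeft k (c + c'))) w =
          (LinearMap.lTensor H (LinearMap.mulLeft k c)) w +
            (LinearMap.lTensor H (LinearMap.mulLeft k c')) w := by
        intro c c' w
        induction w using TensorProduct.induction_on with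
        | zero => simp
        | tmul p q => simp [add_mul, TensorProduct.tmul_add]
        | add s' t' hs' ht' => simp only [map_add, hs', ht']; abel
      simp only [map_add, add_mul, hs, ht, hkap_add]
  have s3d : ∀ x : H ⊗[k] H, phi ((LinearMap.lTensor H W.comul) x) =
      (LinearMap.mul' k H) ((TensorProduct.map W.εt LinearMap.id)
        ((TensorProduct.comm k H H) x)) := by
    intro x
    induction x using TensorProduct.induction_on with
    | zero => simp
    | tmul a b =>
      simp only [hphi, LinearMap.lTensor_tmul, LinearMap.coe_comp, Function.comp_apply,
        LinearEquiv.coe_coe, TensorProduct.comm_tmul, TensorProduct.map_tmul,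
        LinearMap.mul'_apply, LinearMap.id_coe, id_eq]
      rw [W.antipode_right' b]
    | add s t hs ht => simp only [map_add, hs, ht]
  have s4 : ∀ x : H ⊗[k] H,
      (LinearMap.mul' k H) ((TensorProduct.map W.εt LinearMap.id)
        ((TensorProduct.comm k H H) x)) =
      W.deps ((TensorProduct.comm k H H) (W.comul 1) * x) := by
    intro x
    have sub : ∀ (z : H ⊗[k] H) (a b : H),
        ((TensorProduct.lid k H) ((LinearMap.rTensor H W.counit) (z * (b ⊗ₜ[k] (1:H))))) * a =
        W.deps ((TensorProduct.comm k H H) z * (a ⊗ₜ[k] b)) := by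
      intro z a b
      induction z using TensorProduct.induction_on with
      | zero => simp [zero_mul]
      | tmul p q =>
        simp [Algebra.TensorProduct.tmul_mul_tmul, deps_tmul, smul_mul_assoc]
      | add s t hs ht => simp only [map_add, add_mul, hs, ht]
    induction x using TensorProduct.induction_on with
    | zero => simp
    | tmul a b =>
      simp only [TensorProduct.comm_tmul, TensorProduct.map_tmul, LinearMap.mul'_apply,
        LinearMap.id_coe, id_eq]
      rw [W.εt_apply b, sub (W.comul 1) a b]
    | add s t hs ht => simp only [map_add, mul_add, hs, ht]
  rw [s1 R, ← s3c R R, ← h_lTensor, s3d R, s4 R,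
    W.D1op_mul_R R Rbar hR_corner h_RRbar h_RbarR,
    W.deps_R R Rbar hR_corner h_lTensor h_RRbar h_RbarR]

end Main

end WeakHopfAlgebra

open WeakHopfAlgebra in
/-- the Drinfeld element `u = S(R⁽²⁾)R⁽¹⁾` of a quasitriangular weak Hopf
algebra is invertible with inverse `u⁻¹ = R⁽²⁾S²(R⁽¹⁾)` and implements `S²`. -/
theorem WeakHopfAlgebra.drinfeld_element
    {k H : Type*} [Field k] [Ring H] [Algebra k H] [FiniteDimensional k H]
    (W : WeakHopfAlgebra k H) (R Rbar : H ⊗[k] H)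
    (hR_corner : (TensorProduct.comm k H H) (W.comul 1) * R * W.comul 1 = R)
    (hRbar_corner : W.comul 1 * Rbar * (TensorProduct.comm k H H) (W.comul 1) = Rbar)
    (h_intertwine : ∀ h : H, (TensorProduct.comm k H H) (W.comul h) * R = R * W.comul h)
    (h_lTensor : (LinearMap.lTensor H W.comul) R = leg13 k H R * leg12 k H R)
    (h_rTensor : (TensorProduct.assoc k H H H) ((LinearMap.rTensor H W.comul) R) =
      leg13 k H R * leg23 k H R)
    (h_RRbar : R * Rbar = (TensorProduct.comm k H H) (W.comul 1))
    (h_RbarR : Rbar * R = W.comul 1) :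
    (LinearMap.mul' k H) ((LinearMap.rTensor H W.antipode) ((TensorProduct.comm k H H) R)) *
        (LinearMap.mul' k H)
          ((LinearMap.lTensor H (W.antipode ∘ₗ W.antipode)) ((TensorProduct.comm k H H) R)) = 1 ∧
    (LinearMap.mul' k H)
        ((LinearMap.lTensor H (W.antipode ∘ₗ W.antipode)) ((TensorProduct.comm k H H) R)) *
      (LinearMap.mul' k H) ((LinearMap.rTensor H W.antipode) ((TensorProduct.comm k H H) R)) = 1 ∧
    ∀ h : H, W.antipode (W.antipode h) =
      (LinearMap.mul' k H) ((LinearMap.rTensor H W.antipode) ((TensorProduct.comm k H H) R)) *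
        h *
      (LinearMap.mul' k H)
        ((LinearMap.lTensor H (W.antipode ∘ₗ W.antipode)) ((TensorProduct.comm k H H) R)) := by
  have hkapR : (LinearMap.mul' k H)
      ((LinearMap.rTensor H W.antipode) ((TensorProduct.comm k H H) R)) = W.kap R := rfl
  set u : H := W.kap R with hu
  set v : H := (LinearMap.mul' k H)
    ((LinearMap.lTensor H (W.antipode ∘ₗ W.antipode)) ((TensorProduct.comm k H H) R)) with hv
  rw [hkapR]
  have hvu : v * u = 1 :=
    W.vu_one R Rbar hR_corner h_intertwine h_lTensor h_RRbar h_RbarR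
  have hmain : ∀ h : H, u * h = W.antipode (W.antipode h) * u :=
    W.main_rel R Rbar hR_corner h_intertwine h_RRbar h_RbarR
  have hinj : Function.Injective (LinearMap.mulLeft k u) := by
    intro x y hxy
    have h2 := congrArg (fun t => v * t) hxy
    simpa [LinearMap.mulLeft_apply, ← mul_assoc, hvu] using h2
  obtain ⟨w, hw⟩ := (LinearMap.injective_iff_surjective).mp hinj 1
  have hw' : u * w = 1 := hw
  have hvw : v = w := by
    calc v = v * (u * w) := by rw [hw', mul_one]
    _ = v * u * w := (mul_assoc _ _ _).symm
    _ = w := by rw [hvu, one_mul]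
  have huv : u * v = 1 := by rw [hvw, hw']
  refine ⟨huv, hvu, fun h => ?_⟩
  calc W.antipode (W.antipode h) = W.antipode (W.antipode h) * (u * v) := by
        rw [huv, mul_one]
  _ = W.antipode (W.antipode h) * u * v := (mul_assoc _ _ _).symm
  _ = u * h * v := by rw [← hmain h]
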